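/- For any X ∈ M_n(ℂ) and B positive definite with tr(B) = 1, and any unitary U ∈ M_n(ℂ), |tr(U* X)|² ≤ 2 ⟨(L_B + R_B)^{-1} X, X⟩ where the inner product is Hilbert–Schmidt, and consequently |tr(U* X)| ≤ ‖X‖_{B,2}. -/

import Mathlib

open Matrix
open scoped ComplexOrder

noncomputable section

/-- The positive semidefinite square root of a positive semidefinite matrix
(the definition of `Matrix.PosSemidef.sqrt` in the older Mathlib, since removed). -/
def Matrix.PosSemidef.sqrt {n : Type*} [Fintype n] [DecidableEq n] {𝕜 : Type*} [RCLike 𝕜]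
    {A : Matrix n n 𝕜} (hA : PosSemidef A) : Matrix n n 𝕜 :=
  hA.1.eigenvectorUnitary.1 * diagonal ((↑) ∘ (√·) ∘ hA.1.eigenvalues) *
  (star hA.1.eigenvectorUnitary : Matrix n n 𝕜)

theorem Matrix.PosSemidef.posSemidef_sqrt {n : Type*} [Fintype n] [DecidableEq n] {𝕜 : Type*}
    [RCLike 𝕜] {A : Matrix n n 𝕜} (hA : PosSemidef A) : PosSemidef hA.sqrt := by
  apply PosSemidef.mul_mul_conjTranspose_same
  refine posSemidef_diagonal_iff.mpr fun i ↦ ?_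
  rw [Function.comp_apply, RCLike.nonneg_iff]
  constructor
  · simp only [RCLike.ofReal_re]
    exact Real.sqrt_nonneg _
  · simp only [RCLike.ofReal_im]

abbrev Mat (n : ℕ) := Matrix (Fin n) (Fin n) ℂ

/-- Apply `φ` entrywise to the `n × n` blocks of an `m·n × m·n` matrix. -/
def blockApply {n k : ℕ} (φ : Mat n →ₗ[ℂ] Mat k) (m : ℕ)
    (M : Matrix (Fin m × Fin n) (Fin m × Fin n) ℂ) :
    Matrix (Fin m × Fin k) (Fin m × Fin k) ℂ :=
  Matrix.of fun p q => φ (Matrix.of fun a b => M (p.1, a) (q.1, b)) p.2 q.2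

/-- Complete positivity of a linear map between matrix algebras. -/
def IsCP {n k : ℕ} (φ : Mat n →ₗ[ℂ] Mat k) : Prop :=
  ∀ (m : ℕ) (M : Matrix (Fin m × Fin n) (Fin m × Fin n) ℂ),
    M.PosSemidef → (blockApply φ m M).PosSemidef

/-- Trace preservation. -/
def IsTP {n k : ℕ} (φ : Mat n →ₗ[ℂ] Mat k) : Prop :=
  ∀ X : Mat n, (φ X).trace = X.trace

/-- The Hilbert–Schmidt adjoint of `φ`, characterized by
`tr (hsAdj φ A * Xᴴ) = tr (A * (φ X)ᴴ)` for all `X`. -/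
def hsAdj {n k : ℕ} (φ : Mat n →ₗ[ℂ] Mat k) (A : Mat k) : Mat n :=
  Matrix.of fun i j => (A * (φ (Matrix.single i j 1))ᴴ).trace

/-- The trace norm `tr |X| = tr ((Xᴴ X)^{1/2})`. -/
def traceNorm {n : ℕ} (X : Mat n) : ℝ :=
  ((Matrix.posSemidef_conjTranspose_mul_self X).sqrt.trace).re


/-- The positive square root of a positive definite matrix. -/
def sqrtPD {n : ℕ} {B : Mat n} (hB : B.PosDef) : Mat n := hB.posSemidef.sqrt

/-- `B^{-1/2}` for a positive definite `B`. -/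
def invSqrtPD {n : ℕ} {B : Mat n} (hB : B.PosDef) : Mat n := (sqrtPD hB)⁻¹

/-- `B^{-1/4}` for a positive definite `B`. -/
def invFourthPD {n : ℕ} {B : Mat n} (hB : B.PosDef) : Mat n :=
  (hB.posSemidef.posSemidef_sqrt.sqrt)⁻¹

/-- The sandwiched 2-Rényi quasi-relative entropy functional
`S₂(A|B) = tr ((B^{-1/4} A B^{-1/4})²)`. -/
def S2 {n : ℕ} (A : Mat n) {B : Mat n} (hB : B.PosDef) : ℝ :=
  (((invFourthPD hB * A * invFourthPD hB) ^ 2).trace).re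

/-- The squared Araki–Masuda weighted 2-norm `‖X‖²_{B,2}`. -/
def wNormSq {n : ℕ} (X : Mat n) {B : Mat n} (hB : B.PosDef) : ℝ :=
  (((invFourthPD hB * X * invFourthPD hB)ᴴ * (invFourthPD hB * X * invFourthPD hB)).trace).re

/-- The Petz recovery map `Y ↦ B^{1/2} φ*(φ(B)^{-1/2} Y φ(B)^{-1/2}) B^{1/2}`. -/
def petz {n k : ℕ} (φ : Mat n →ₗ[ℂ] Mat k) {B : Mat n} (hB : B.PosDef)
    (hφB : (φ B).PosDef) (Y : Mat k) : Mat n :=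
  sqrtPD hB * hsAdj φ (invSqrtPD hφB * Y * invSqrtPD hφB) * sqrtPD hB

/-- Squared Frobenius (Hilbert–Schmidt) norm. -/
def frobSq {n : ℕ} (X : Mat n) : ℝ := ((Xᴴ * X).trace).re

theorem psd_sqrt_mul_self {n : ℕ} {B : Mat n} (hB : B.PosSemidef) : hB.sqrt * hB.sqrt = B := by
  conv_rhs => rw [hB.1.spectral_theorem]
  have hV : (star hB.1.eigenvectorUnitary : Mat n) * hB.1.eigenvectorUnitary = 1 :=
    Unitary.coe_star_mul_self _
  simp only [Matrix.PosSemidef.sqrt, Unitary.conjStarAlgAut_apply]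
  rw [show ∀ A D E C F : Mat n, A * D * E * (C * F * E) = A * (D * (E * C) * F) * E by
    intro A D E C F; simp only [Matrix.mul_assoc], hV, Matrix.mul_one, diagonal_mul_diagonal]
  congr 3
  funext i
  simp only [Function.comp_apply]
  rw [← RCLike.ofReal_mul, Real.mul_self_sqrt (hB.eigenvalues_nonneg i)]

def toE {n : ℕ} (A : Mat n) : EuclideanSpace ℂ (Fin n × Fin n) :=
  (WithLp.equiv 2 _).symm (fun p => A p.1 p.2)

lemma trace_eq_inner {n : ℕ} (A C : Mat n) :
    (Aᴴ * C).trace = @inner ℂ _ _ (toE A) (toE C) := by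
  simp [Matrix.trace, Matrix.diag, Matrix.mul_apply, PiLp.inner_apply, toE,
    RCLike.inner_apply, Matrix.conjTranspose_apply, mul_comm]
  rw [Finset.sum_comm, ← Finset.sum_product']
  rfl

lemma trace_self_re {n : ℕ} (A : Mat n) : ((Aᴴ * A).trace).re = ‖toE A‖ ^ 2 := by
  rw [trace_eq_inner, ← @inner_self_eq_norm_sq ℂ]; rfl

lemma trace_self_nonneg {n : ℕ} (A : Mat n) : 0 ≤ ((Aᴴ * A).trace).re := by
  rw [trace_self_re]; positivity

lemma trace_cs {n : ℕ} (A C : Mat n) :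
    ‖(Aᴴ * C).trace‖ ≤
      Real.sqrt (((Aᴴ * A).trace).re) * Real.sqrt (((Cᴴ * C).trace).re) := by
  rw [trace_eq_inner, trace_self_re, trace_self_re,
    Real.sqrt_sq (norm_nonneg _), Real.sqrt_sq (norm_nonneg _)]
  exact norm_inner_le_norm _ _

set_option maxHeartbeats 1000000 in
theorem aux {n : ℕ} {B S Q : Mat n} (htrB : B.trace = 1)
    (hSH : Sᴴ = S) (hSS : S * S = B) (hQH : Qᴴ = Q) (hQQ : Q * Q = S)
    (hdetB : IsUnit B.det)
    (U : Mat n) (hU : U ∈ Matrix.unitaryGroup (Fin n) ℂ)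
    (X Y : Mat n) (hY : B * Y + Y * B = X) :
    ‖(star U * X).trace‖ ^ 2 ≤ 2 * ((Xᴴ * Y).trace).re ∧
      ‖(star U * X).trace‖ ≤
        Real.sqrt (((Xᴴ * S⁻¹ * X * S⁻¹).trace).re) := by
  have hdetS : IsUnit S.det := by
    have : IsUnit (S.det * S.det) := by rw [← Matrix.det_mul, hSS]; exact hdetB
    exact isUnit_of_mul_isUnit_left this
  have hdetQ : IsUnit Q.det := by
    have : IsUnit (Q.det * Q.det) := by rw [← Matrix.det_mul, hQQ]; exact hdetS
    exact isUnit_of_mul_isUnit_left this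
  have hQi1 : Q * Q⁻¹ = 1 := Matrix.mul_nonsing_inv Q hdetQ
  have hQi2 : Q⁻¹ * Q = 1 := Matrix.nonsing_inv_mul Q hdetQ
  have hQiH : (Q⁻¹)ᴴ = Q⁻¹ := by rw [Matrix.conjTranspose_nonsing_inv, hQH]
  have hSi : S⁻¹ = Q⁻¹ * Q⁻¹ := by rw [← hQQ, Matrix.mul_inv_rev]
  have hU1 : Uᴴ * U = 1 := by
    rw [← Matrix.star_eq_conjTranspose]; exact (Unitary.mem_iff.mp hU).1
  have hU2 : U * Uᴴ = 1 := by
    rw [← Matrix.star_eq_conjTranspose]; exact (Unitary.mem_iff.mp hU).2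
  have hstar : (star U * X).trace = (Uᴴ * X).trace := by
    rw [Matrix.star_eq_conjTranspose]
  -- Part 1 pieces
  have e1 : ((S*U)ᴴ*(S*Y)).trace = (Uᴴ*(B*Y)).trace := by
    rw [Matrix.conjTranspose_mul, hSH, Matrix.mul_assoc, ← Matrix.mul_assoc S S Y, hSS]
  have e2 : ((U*S)ᴴ*(Y*S)).trace = (Uᴴ*(Y*B)).trace := by
    rw [Matrix.conjTranspose_mul, hSH, Matrix.mul_assoc, Matrix.trace_mul_comm]
    congr 1
    rw [Matrix.mul_assoc, Matrix.mul_assoc, hSS]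
  have h_t : (Uᴴ * X).trace = ((S*U)ᴴ*(S*Y)).trace + ((U*S)ᴴ*(Y*S)).trace := by
    rw [e1, e2, ← Matrix.trace_add, ← Matrix.mul_add, hY]
  have hA1 : (((S*U)ᴴ*(S*U)).trace).re = 1 := by
    have : ((S*U)ᴴ*(S*U)).trace = 1 := by
      rw [Matrix.conjTranspose_mul, hSH, Matrix.mul_assoc, ← Matrix.mul_assoc S S U, hSS,
        ← Matrix.mul_assoc, Matrix.trace_mul_cycle, hU2, Matrix.one_mul, htrB]
    rw [this]; rfl
  have hA2 : (((U*S)ᴴ*(U*S)).trace).re = 1 := by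
    have : ((U*S)ᴴ*(U*S)).trace = 1 := by
      rw [Matrix.conjTranspose_mul, hSH, Matrix.mul_assoc, ← Matrix.mul_assoc Uᴴ U S, hU1,
        Matrix.one_mul, hSS, htrB]
    rw [this]; rfl
  have eY1 : ((S*Y)ᴴ*(S*Y)).trace = (Yᴴ*(B*Y)).trace := by
    rw [Matrix.conjTranspose_mul, hSH, Matrix.mul_assoc, ← Matrix.mul_assoc S S Y, hSS]
  have eY2 : ((Y*S)ᴴ*(Y*S)).trace = (Yᴴ*(Y*B)).trace := by
    rw [Matrix.conjTranspose_mul, hSH, Matrix.mul_assoc, Matrix.trace_mul_comm]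
    congr 1
    rw [Matrix.mul_assoc, Matrix.mul_assoc, hSS]
  have hC : (((S*Y)ᴴ*(S*Y)).trace).re + (((Y*S)ᴴ*(Y*S)).trace).re = ((Xᴴ*Y).trace).re := by
    have hYX : ((S*Y)ᴴ*(S*Y)).trace + ((Y*S)ᴴ*(Y*S)).trace = (Yᴴ*X).trace := by
      rw [eY1, eY2, ← Matrix.trace_add, ← Matrix.mul_add, hY]
    have hXY : ((Xᴴ*Y).trace).re = ((Yᴴ*X).trace).re := by
      have : Yᴴ*X = (Xᴴ*Y)ᴴ := by simp [Matrix.conjTranspose_mul]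
      rw [this, Matrix.trace_conjTranspose]
      simp [Complex.star_def]
    rw [hXY, ← hYX]; simp
  -- part 1 conclusion
  set p := Real.sqrt (((S*Y)ᴴ*(S*Y)).trace.re) with hp
  set q := Real.sqrt (((Y*S)ᴴ*(Y*S)).trace.re) with hq
  have hp0 : 0 ≤ p := Real.sqrt_nonneg _
  have hq0 : 0 ≤ q := Real.sqrt_nonneg _
  have hp2 : p^2 = ((S*Y)ᴴ*(S*Y)).trace.re := Real.sq_sqrt (trace_self_nonneg _)
  have hq2 : q^2 = ((Y*S)ᴴ*(Y*S)).trace.re := Real.sq_sqrt (trace_self_nonneg _)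
  have habs : ‖(star U * X).trace‖ ≤ p + q := by
    rw [hstar, h_t]
    calc ‖((S*U)ᴴ*(S*Y)).trace + ((U*S)ᴴ*(Y*S)).trace‖
        ≤ ‖((S*U)ᴴ*(S*Y)).trace‖ + ‖((U*S)ᴴ*(Y*S)).trace‖ :=
          norm_add_le _ _
      _ ≤ Real.sqrt ((((S*U)ᴴ*(S*U)).trace).re) * p
            + Real.sqrt ((((U*S)ᴴ*(U*S)).trace).re) * q :=
          add_le_add (trace_cs _ _) (trace_cs _ _)
      _ = p + q := by rw [hA1, hA2]; simp
  have part1 : ‖(star U * X).trace‖ ^ 2 ≤ 2 * ((Xᴴ * Y).trace).re := by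
    have h1 : ‖(star U * X).trace‖ ^ 2 ≤ (p + q)^2 := by
      have := norm_nonneg ((star U * X).trace)
      nlinarith
    have h2 : (p + q)^2 ≤ 2 * (p^2 + q^2) := by nlinarith [sq_nonneg (p - q)]
    rw [hp2, hq2, hC] at h2
    linarith
  -- Part 2
  have eV : ((Q*U*Q)ᴴ*(Q*U*Q)).trace = ((S*U)ᴴ*(U*S)).trace := by
    rw [Matrix.conjTranspose_mul, Matrix.conjTranspose_mul, hQH]
    calc (Q * (Uᴴ * Q) * (Q*U*Q)).trace
        = (Q * (Uᴴ * Q * (Q*U*Q))).trace := by rw [Matrix.mul_assoc, Matrix.mul_assoc]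
      _ = ((Uᴴ * Q * (Q*U*Q)) * Q).trace := Matrix.trace_mul_comm _ _
      _ = ((S*U)ᴴ*(U*S)).trace := by
          rw [Matrix.conjTranspose_mul, hSH]
          congr 1
          calc Uᴴ * Q * (Q*U*Q) * Q = Uᴴ * (Q * Q) * U * (Q * Q) := by
                simp only [Matrix.mul_assoc]
            _ = Uᴴ * S * (U * S) := by rw [hQQ]; simp only [Matrix.mul_assoc]
  have ht2 : (Uᴴ * X).trace = ((Q*U*Q)ᴴ*(Q⁻¹*X*Q⁻¹)).trace := by
    rw [Matrix.conjTranspose_mul, Matrix.conjTranspose_mul, hQH]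
    calc (Uᴴ * X).trace
        = ((Uᴴ * (X * Q⁻¹)) * Q).trace := by
          rw [Matrix.mul_assoc, Matrix.mul_assoc, hQi2, Matrix.mul_one]
      _ = (Q * (Uᴴ * (X * Q⁻¹))).trace := (Matrix.trace_mul_comm _ _).symm
      _ = (Q * (Uᴴ * Q) * (Q⁻¹*X*Q⁻¹)).trace := by
          congr 1
          symm
          calc Q * (Uᴴ * Q) * (Q⁻¹*X*Q⁻¹) = Q * (Uᴴ * (Q * Q⁻¹ * (X * Q⁻¹))) := by
                simp only [Matrix.mul_assoc]
            _ = Q * (Uᴴ * (X * Q⁻¹)) := by rw [hQi1, Matrix.one_mul]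
  have eZ : ((Q⁻¹*X*Q⁻¹)ᴴ*(Q⁻¹*X*Q⁻¹)).trace = (Xᴴ * S⁻¹ * X * S⁻¹).trace := by
    rw [Matrix.conjTranspose_mul, Matrix.conjTranspose_mul, hQiH]
    calc (Q⁻¹ * (Xᴴ * Q⁻¹) * (Q⁻¹*X*Q⁻¹)).trace
        = (Q⁻¹ * ((Xᴴ * Q⁻¹) * (Q⁻¹*X*Q⁻¹))).trace := by rw [Matrix.mul_assoc]
      _ = (((Xᴴ * Q⁻¹) * (Q⁻¹*X*Q⁻¹)) * Q⁻¹).trace := Matrix.trace_mul_comm _ _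
      _ = (Xᴴ * S⁻¹ * X * S⁻¹).trace := by
          congr 1
          calc Xᴴ * Q⁻¹ * (Q⁻¹*X*Q⁻¹) * Q⁻¹
              = Xᴴ * (Q⁻¹ * Q⁻¹) * X * (Q⁻¹ * Q⁻¹) := by simp only [Matrix.mul_assoc]
            _ = Xᴴ * S⁻¹ * X * S⁻¹ := by rw [← hSi]
  have hVle : (((Q*U*Q)ᴴ*(Q*U*Q)).trace).re ≤ 1 := by
    rw [eV]
    calc (((S*U)ᴴ*(U*S)).trace).re ≤ ‖((S*U)ᴴ*(U*S)).trace‖ :=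
          Complex.re_le_norm _
      _ ≤ Real.sqrt ((((S*U)ᴴ*(S*U)).trace).re) * Real.sqrt ((((U*S)ᴴ*(U*S)).trace).re) :=
          trace_cs _ _
      _ = 1 := by rw [hA1, hA2]; simp
  have part2 : ‖(star U * X).trace‖ ≤
      Real.sqrt (((Xᴴ * S⁻¹ * X * S⁻¹).trace).re) := by
    have hcs := trace_cs (Q*U*Q) (Q⁻¹*X*Q⁻¹)
    rw [← ht2, eZ] at hcs
    rw [hstar]
    calc ‖(Uᴴ * X).trace‖
        ≤ Real.sqrt ((((Q*U*Q)ᴴ*(Q*U*Q)).trace).re)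
            * Real.sqrt (((Xᴴ * S⁻¹ * X * S⁻¹).trace).re) := hcs
      _ ≤ 1 * Real.sqrt (((Xᴴ * S⁻¹ * X * S⁻¹).trace).re) := by
          apply mul_le_mul_of_nonneg_right _ (Real.sqrt_nonneg _)
          rw [show (1:ℝ) = Real.sqrt 1 by simp]
          exact Real.sqrt_le_sqrt hVle
      _ = _ := one_mul _
  exact ⟨part1, part2⟩


theorem unitary_trace_bound {n : ℕ} {B : Mat n} (hB : B.PosDef) (htrB : B.trace = 1)
    (U : Mat n) (hU : U ∈ Matrix.unitaryGroup (Fin n) ℂ)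
    (X Y : Mat n) (hY : B * Y + Y * B = X) :
    ‖(star U * X).trace‖ ^ 2 ≤ 2 * ((Xᴴ * Y).trace).re ∧
      ‖(star U * X).trace‖ ≤
        Real.sqrt (((Xᴴ * invSqrtPD hB * X * invSqrtPD hB).trace).re) :=
  aux htrB hB.posSemidef.posSemidef_sqrt.1 (psd_sqrt_mul_self hB.posSemidef)
    hB.posSemidef.posSemidef_sqrt.posSemidef_sqrt.1
    (psd_sqrt_mul_self hB.posSemidef.posSemidef_sqrt)
    ((Matrix.isUnit_iff_isUnit_det B).mp hB.isUnit) U hU X Y hY
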